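/- Let (Ω, μ) be a measure space with μ(Ω) < ∞, let D, R₀, R₅ > 0, and let χ ∈ (0,1]. Let Λ_φ, Λ_S, Θ_S, Θ_φ : ℝ² → ℝ be Borel measurable functions satisfying |Λ_φ(a,b)| ≤ R₀(1+|a|+|b|), |Λ_S(a,b)| ≤ R₀(1+|a|+|b|), |Θ_S(a,b)| ≤ R₀, and R₅ ≤ Θ_φ(a,b) ≤ R₀ for all (a,b) ∈ ℝ². Then there exists a constant C > 0 depending only on R₀, R₅, D and μ(Ω) such that for all square-integrable φ, σ, w : Ω → ℝ, setting Γ_φ = Λ_φ(φ,σ) − Θ_φ(φ,σ) w and S = Λ_S(φ,σ) − Θ_S(φ,σ) w pointwise, one has ∫_Ω (Γ_φ w − S (Dσ + χ(1−φ))) dμ ≤ −(R₅/2) ∫_Ω w² dμ + C (1+χ²) (1 + ∫_Ω φ² dμ + ∫_Ω σ² dμ). -/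

import Mathlib

/-!
Pointwise, `-Θφ w² ≤ -R₅ w²` is the only term of definite sign. Young's inequality spends a
quarter of it on each of `Λφ w` and `ΘS w B`, where `B = Dσ + χ(1 - φ)`, leaving `-(R₅/2) w²`
plus squares of `Λφ`, `ΛS` and `B`; the growth bounds turn these into multiples of
`(1 + χ²)(1 + φ² + σ²)`, which integrate over a space of finite measure.
-/

open MeasureTheory

theorem source_pointwise_le {R₅ t a b c v B : ℝ} (hR₅ : 0 < R₅) (ht : R₅ ≤ t) :
    (a - t * v) * v - (b - c * v) * B ≤
      -(R₅ / 2) * v ^ 2 + a ^ 2 / R₅ + b ^ 2 / 2 + (c ^ 2 / R₅ + 1 / 2) * B ^ 2 := by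
  have key : -(R₅ / 2) * v ^ 2 + a ^ 2 / R₅ + b ^ 2 / 2 + (c ^ 2 / R₅ + 1 / 2) * B ^ 2 -
      ((a - t * v) * v - (b - c * v) * B) =
      (t - R₅) * v ^ 2 + (R₅ * v / 2 - a) ^ 2 / R₅ + (R₅ * v / 2 - c * B) ^ 2 / R₅ +
        (b + B) ^ 2 / 2 := by
    field_simp
    ring
  have hθ : 0 ≤ (t - R₅) * v ^ 2 := mul_nonneg (sub_nonneg.2 ht) (sq_nonneg v)
  have hsq : 0 ≤ (R₅ * v / 2 - a) ^ 2 / R₅ + (R₅ * v / 2 - c * B) ^ 2 / R₅ + (b + B) ^ 2 / 2 := by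
    positivity
  linarith

theorem sq_le_of_abs_le_linear {R a p s : ℝ} (ha : |a| ≤ R * (1 + |p| + |s|)) :
    a ^ 2 ≤ 3 * R ^ 2 * (1 + p ^ 2 + s ^ 2) := by
  have h : a ^ 2 ≤ R ^ 2 * (1 + |p| + |s|) ^ 2 := by
    rw [← mul_pow, ← sq_abs a]
    exact pow_le_pow_left₀ (abs_nonneg a) ha 2
  have hM : (1 + |p| + |s|) ^ 2 ≤ 3 * (1 + p ^ 2 + s ^ 2) := by
    nlinarith [sq_nonneg (|p| - |s|), sq_nonneg (|p| - 1), sq_nonneg (|s| - 1), sq_abs p, sq_abs s]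
  nlinarith [mul_le_mul_of_nonneg_left hM (sq_nonneg R)]

theorem nutrient_potential_sq_le (D χ p s : ℝ) :
    (D * s + χ * (1 - p)) ^ 2 ≤ (2 * D ^ 2 + 4) * (1 + χ ^ 2) * (1 + p ^ 2 + s ^ 2) := by
  nlinarith [sq_nonneg (D * s - χ * (1 - p)), sq_nonneg (1 + p), sq_nonneg (D * s * χ),
    sq_nonneg (D * χ), sq_nonneg (χ * (1 + p)), sq_nonneg (D * χ * p), sq_nonneg (D * p)]

noncomputable def sourceAbsorptionConst (R₀ R₅ D : ℝ) : ℝ :=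
  3 * R₀ ^ 2 * (1 / R₅ + 1 / 2) + (R₀ ^ 2 / R₅ + 1 / 2) * (2 * D ^ 2 + 4)

theorem sourceAbsorptionConst_pos {R₅ : ℝ} (R₀ D : ℝ) (hR₅ : 0 < R₅) :
    0 < sourceAbsorptionConst R₀ R₅ D := by
  unfold sourceAbsorptionConst
  positivity

theorem source_integrand_le {R₀ R₅ D χ a b c t p s v : ℝ} (hR₅ : 0 < R₅)
    (ha : |a| ≤ R₀ * (1 + |p| + |s|)) (hb : |b| ≤ R₀ * (1 + |p| + |s|)) (hc : |c| ≤ R₀)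
    (ht : R₅ ≤ t) :
    (a - t * v) * v - (b - c * v) * (D * s + χ * (1 - p)) ≤
      -(R₅ / 2) * v ^ 2 + sourceAbsorptionConst R₀ R₅ D * (1 + χ ^ 2) * (1 + p ^ 2 + s ^ 2) := by
  set Q := 1 + p ^ 2 + s ^ 2
  have hc2 : c ^ 2 ≤ R₀ ^ 2 := sq_le_sq.2 (hc.trans (le_abs_self R₀))
  have hQ : Q ≤ (1 + χ ^ 2) * Q := le_mul_of_one_le_left (by positivity) (by nlinarith)
  calc (a - t * v) * v - (b - c * v) * (D * s + χ * (1 - p))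
      ≤ -(R₅ / 2) * v ^ 2 + a ^ 2 / R₅ + b ^ 2 / 2 +
          (c ^ 2 / R₅ + 1 / 2) * (D * s + χ * (1 - p)) ^ 2 := source_pointwise_le hR₅ ht
    _ ≤ -(R₅ / 2) * v ^ 2 + 3 * R₀ ^ 2 * Q / R₅ + 3 * R₀ ^ 2 * Q / 2 +
          (R₀ ^ 2 / R₅ + 1 / 2) * ((2 * D ^ 2 + 4) * (1 + χ ^ 2) * Q) := by
      gcongr
      · exact sq_le_of_abs_le_linear ha
      · exact sq_le_of_abs_le_linear hb
      · exact nutrient_potential_sq_le D χ p s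
    _ ≤ -(R₅ / 2) * v ^ 2 + sourceAbsorptionConst R₀ R₅ D * (1 + χ ^ 2) * Q := by
      unfold sourceAbsorptionConst
      have hK : 0 ≤ 3 * R₀ ^ 2 * (1 / R₅ + 1 / 2) := by positivity
      have e : 3 * R₀ ^ 2 * Q / R₅ + 3 * R₀ ^ 2 * Q / 2 = 3 * R₀ ^ 2 * (1 / R₅ + 1 / 2) * Q := by
        ring
      linarith [mul_le_mul_of_nonneg_left hQ hK]

namespace MeasureTheory

variable {Ω : Type*} [MeasurableSpace Ω] {μ : Measure Ω} {p : ENNReal} {φ σ w : Ω → ℝ}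

theorem MemLp.comp_of_abs_le_linear [IsFiniteMeasure μ] {F : ℝ × ℝ → ℝ} (hF : Measurable F)
    {R : ℝ} (hFR : ∀ a b : ℝ, |F (a, b)| ≤ R * (1 + |a| + |b|))
    (hφ : MemLp φ p μ) (hσ : MemLp σ p μ) : MemLp (fun x => F (φ x, σ x)) p μ := by
  have hg : MemLp (fun x => R * (1 + |φ x| + |σ x|)) p μ := by
    simpa using (((memLp_const (1 : ℝ)).add hφ.abs).add hσ.abs).const_mul R
  refine hg.of_le ?_ (ae_of_all _ fun x => ?_)
  · exact (hF.comp_aemeasurable (hφ.aemeasurable.prodMk hσ.aemeasurable)).aestronglyMeasurable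
  · exact (hFR _ _).trans (le_abs_self _)

theorem MemLp.comp_mul_of_abs_le {F : ℝ × ℝ → ℝ} (hF : Measurable F) {R : ℝ}
    (hFR : ∀ a b : ℝ, |F (a, b)| ≤ R) (hφ : AEMeasurable φ μ) (hσ : AEMeasurable σ μ)
    (hw : MemLp w p μ) : MemLp (fun x => F (φ x, σ x) * w x) p μ :=
  hw.mul' (memLp_top_of_bound (hF.comp_aemeasurable (hφ.prodMk hσ)).aestronglyMeasurable R
    (ae_of_all _ fun _ => hFR _ _))

theorem MemLp.source_term [IsFiniteMeasure μ] {Λ Θ : ℝ × ℝ → ℝ} (hΛ : Measurable Λ)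
    (hΘ : Measurable Θ) {R : ℝ} (hΛR : ∀ a b : ℝ, |Λ (a, b)| ≤ R * (1 + |a| + |b|))
    (hΘR : ∀ a b : ℝ, |Θ (a, b)| ≤ R) (hφ : MemLp φ p μ) (hσ : MemLp σ p μ)
    (hw : MemLp w p μ) : MemLp (fun x => Λ (φ x, σ x) - Θ (φ x, σ x) * w x) p μ :=
  (hφ.comp_of_abs_le_linear hΛ hΛR hσ).sub
    (hw.comp_mul_of_abs_le hΘ hΘR hφ.aemeasurable hσ.aemeasurable)

theorem integrable_mul_sq_add_mul [IsFiniteMeasure μ] (α β : ℝ) (hφ : MemLp φ 2 μ)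
    (hσ : MemLp σ 2 μ) (hw : MemLp w 2 μ) :
    Integrable (fun x => α * w x ^ 2 + β * (1 + φ x ^ 2 + σ x ^ 2)) μ :=
  (hw.integrable_sq.const_mul α).add
    ((((integrable_const 1).add hφ.integrable_sq).add hσ.integrable_sq).const_mul β)

theorem integral_mul_sq_add_mul_eq [IsFiniteMeasure μ] (α β : ℝ) (hφ : MemLp φ 2 μ)
    (hσ : MemLp σ 2 μ) (hw : MemLp w 2 μ) :
    ∫ x, (α * w x ^ 2 + β * (1 + φ x ^ 2 + σ x ^ 2)) ∂μ =
      α * ∫ x, w x ^ 2 ∂μ + β * (μ.real Set.univ + ∫ x, φ x ^ 2 ∂μ + ∫ x, σ x ^ 2 ∂μ) := by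
  have h1 : Integrable (fun x => 1 + φ x ^ 2) μ := (integrable_const 1).add hφ.integrable_sq
  have h2 : Integrable (fun x => 1 + φ x ^ 2 + σ x ^ 2) μ := h1.add hσ.integrable_sq
  rw [integral_add (hw.integrable_sq.const_mul α) (h2.const_mul β),
    integral_const_mul, integral_const_mul, integral_add h1 hσ.integrable_sq,
    integral_add (integrable_const 1) hφ.integrable_sq, integral_const, smul_eq_mul, mul_one]

end MeasureTheory

theorem source_term_absorption_general
    {Ω : Type*} [MeasurableSpace Ω] (μ : Measure Ω) [IsFiniteMeasure μ]
    (D R₀ R₅ : ℝ) (hR₅ : 0 < R₅)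
    (χ : ℝ)
    (Λφ ΛS ΘS Θφ : ℝ × ℝ → ℝ)
    (hΛφm : Measurable Λφ) (hΛSm : Measurable ΛS)
    (hΘSm : Measurable ΘS) (hΘφm : Measurable Θφ)
    (hΛφ : ∀ a b : ℝ, |Λφ (a, b)| ≤ R₀ * (1 + |a| + |b|))
    (hΛS : ∀ a b : ℝ, |ΛS (a, b)| ≤ R₀ * (1 + |a| + |b|))
    (hΘS : ∀ a b : ℝ, |ΘS (a, b)| ≤ R₀)
    (hΘφ : ∀ a b : ℝ, R₅ ≤ Θφ (a, b) ∧ Θφ (a, b) ≤ R₀) :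
    ∃ C : ℝ, 0 < C ∧
      ∀ φ σ w : Ω → ℝ, MemLp φ 2 μ → MemLp σ 2 μ → MemLp w 2 μ →
        ∫ x, ((Λφ (φ x, σ x) - Θφ (φ x, σ x) * w x) * w x -
              (ΛS (φ x, σ x) - ΘS (φ x, σ x) * w x) *
                (D * σ x + χ * (1 - φ x))) ∂μ ≤
          -(R₅ / 2) * ∫ x, (w x) ^ 2 ∂μ +
          C * (1 + χ ^ 2) * (1 + (∫ x, (φ x) ^ 2 ∂μ) + ∫ x, (σ x) ^ 2 ∂μ) := by
  set K := sourceAbsorptionConst R₀ R₅ D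
  have hK : 0 < K := sourceAbsorptionConst_pos R₀ D hR₅
  have hm : 0 ≤ μ.real Set.univ := measureReal_nonneg
  refine ⟨K * (1 + μ.real Set.univ), by positivity, fun φ σ w hφ hσ hw => ?_⟩
  have hΘφ_abs (a b : ℝ) : |Θφ (a, b)| ≤ R₀ :=
    abs_le.2 ⟨by linarith [hΘφ a b], (hΘφ a b).2⟩
  have hB : MemLp (fun x => D * σ x + χ * (1 - φ x)) 2 μ := by
    simpa [Pi.add_def] using (hσ.const_mul D).add (((memLp_const (1 : ℝ)).sub hφ).const_mul χ)
  have hI : Integrable (fun x => (Λφ (φ x, σ x) - Θφ (φ x, σ x) * w x) * w x -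
      (ΛS (φ x, σ x) - ΘS (φ x, σ x) * w x) * (D * σ x + χ * (1 - φ x))) μ :=
    ((hφ.source_term hΛφm hΘφm hΛφ hΘφ_abs hσ hw).integrable_mul hw).sub
      ((hφ.source_term hΛSm hΘSm hΛS hΘS hσ hw).integrable_mul hB)
  have hA : 0 ≤ ∫ x, φ x ^ 2 ∂μ := integral_nonneg fun x => sq_nonneg _
  have hS : 0 ≤ ∫ x, σ x ^ 2 ∂μ := integral_nonneg fun x => sq_nonneg _
  calc _ ≤ ∫ x, (-(R₅ / 2) * w x ^ 2 + K * (1 + χ ^ 2) * (1 + φ x ^ 2 + σ x ^ 2)) ∂μ :=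
        integral_mono hI (integrable_mul_sq_add_mul _ _ hφ hσ hw) fun x =>
          source_integrand_le hR₅ (hΛφ _ _) (hΛS _ _) (hΘS _ _) (hΘφ _ _).1
    _ = -(R₅ / 2) * ∫ x, w x ^ 2 ∂μ + K * (1 + χ ^ 2) *
          (μ.real Set.univ + ∫ x, φ x ^ 2 ∂μ + ∫ x, σ x ^ 2 ∂μ) :=
        integral_mul_sq_add_mul_eq _ _ hφ hσ hw
    _ ≤ -(R₅ / 2) * ∫ x, w x ^ 2 ∂μ + K * (1 + χ ^ 2) *
          ((1 + μ.real Set.univ) * (1 + ∫ x, φ x ^ 2 ∂μ + ∫ x, σ x ^ 2 ∂μ)) := by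
        gcongr
        nlinarith [mul_nonneg hm (add_nonneg hA hS)]
    _ = _ := by ring

/-- When `Θφ` is bounded below by a positive constant `R₅`, the quadratic term
`Θφ w²` in the energy identity absorbs the remaining source contributions up to
lower-order `L²` terms. -/
theorem source_term_absorption
    {Ω : Type*} [MeasurableSpace Ω] (μ : Measure Ω) [IsFiniteMeasure μ]
    (D R₀ R₅ : ℝ) (hD : 0 < D) (hR₀ : 0 < R₀) (hR₅ : 0 < R₅)
    (χ : ℝ) (hχ0 : 0 < χ) (hχ1 : χ ≤ 1)
    (Λφ ΛS ΘS Θφ : ℝ × ℝ → ℝ)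
    (hΛφm : Measurable Λφ) (hΛSm : Measurable ΛS)
    (hΘSm : Measurable ΘS) (hΘφm : Measurable Θφ)
    (hΛφ : ∀ a b : ℝ, |Λφ (a, b)| ≤ R₀ * (1 + |a| + |b|))
    (hΛS : ∀ a b : ℝ, |ΛS (a, b)| ≤ R₀ * (1 + |a| + |b|))
    (hΘS : ∀ a b : ℝ, |ΘS (a, b)| ≤ R₀)
    (hΘφ : ∀ a b : ℝ, R₅ ≤ Θφ (a, b) ∧ Θφ (a, b) ≤ R₀) :
    ∃ C : ℝ, 0 < C ∧
      ∀ φ σ w : Ω → ℝ, MemLp φ 2 μ → MemLp σ 2 μ → MemLp w 2 μ →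
        ∫ x, ((Λφ (φ x, σ x) - Θφ (φ x, σ x) * w x) * w x -
              (ΛS (φ x, σ x) - ΘS (φ x, σ x) * w x) *
                (D * σ x + χ * (1 - φ x))) ∂μ ≤
          -(R₅ / 2) * ∫ x, (w x) ^ 2 ∂μ +
          C * (1 + χ ^ 2) * (1 + (∫ x, (φ x) ^ 2 ∂μ) + ∫ x, (σ x) ^ 2 ∂μ) :=
  source_term_absorption_general μ D R₀ R₅ hR₅ χ Λφ ΛS ΘS Θφ hΛφm hΛSm hΘSm hΘφm hΛφ hΛS hΘS hΘφ
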